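/- arXiv:2005.11496 — 3 statements merged into one kernel-verified Lean document; each statement's English description precedes it below -/
import Mathlib

section
/- Let ℓ₁, ℓ₂ ∈ (−1,1) with ℓ₁ ≠ ℓ₂ and let e₁ be the first standard basis vector of ℝ⁵. Let W₁, W₂ : ℝ⁵ → ℝ be continuous functions such that |W₁(x)| ≤ C⟨x⟩^{−4} and |W₂(x)| ≤ C⟨x⟩^{−4} for all x ∈ ℝ⁵, for some constant C > 0. Let α₁, α₂ be real numbers with 0 < α₁ ≤ α₂, α₁ + α₂ > 5/4 and α₂ > 5/4. Then there exist T₀ > 0 and C′ > 0 such that for all t ≥ T₀, ∫_{ℝ⁵} |W₁(x − ℓ₁ t e₁)|^{α₁} · |W₂(x − ℓ₂ t e₁)|^{α₂} dx ≤ C′ t^{−4α₁}. -/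
open MeasureTheory

/-- The Japanese bracket `⟨x⟩ = (1 + |x|²)^{1/2}`. -/
noncomputable def jap (x : EuclideanSpace ℝ (Fin 5)) : ℝ := Real.sqrt (1 + ‖x‖ ^ 2)

/-- The first standard basis vector of `ℝ⁵`. -/
noncomputable def e1 : EuclideanSpace ℝ (Fin 5) := EuclideanSpace.single 0 1

lemma jap_pos (x : EuclideanSpace ℝ (Fin 5)) : 0 < jap x :=
  Real.sqrt_pos.mpr (by positivity)

lemma norm_le_jap (x : EuclideanSpace ℝ (Fin 5)) : ‖x‖ ≤ jap x := by
  have : ‖x‖ = Real.sqrt (‖x‖ ^ 2) := by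
    rw [Real.sqrt_sq (norm_nonneg x)]
  rw [this]
  exact Real.sqrt_le_sqrt (by nlinarith [norm_nonneg x])

/-- If `‖y-z‖/2 ≤ ‖y‖` then `jap (y - z) ≤ 2 * jap y`. -/
lemma jap_sub_le {y z : EuclideanSpace ℝ (Fin 5)} (h : ‖y - z‖ / 2 ≤ ‖y‖) :
    jap (y - z) ≤ 2 * jap y := by
  have h2 : (2 : ℝ) * jap y = Real.sqrt (4 * (1 + ‖y‖ ^ 2)) := by
    rw [show (4 : ℝ) * (1 + ‖y‖ ^ 2) = 2 ^ 2 * (1 + ‖y‖ ^ 2) by ring,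
      Real.sqrt_mul (by positivity), Real.sqrt_sq (by norm_num)]
    rfl
  rw [jap, h2]
  apply Real.sqrt_le_sqrt
  have hy : 0 ≤ ‖y‖ := norm_nonneg y
  nlinarith [norm_nonneg (y - z)]

/-- Base comparison for negative powers. -/
lemma rpow_neg_le_of_le {s r p : ℝ} (hs : 0 < s) (hsr : s ≤ r) (hp : 0 ≤ p) :
    r ^ (-p) ≤ s ^ (-p) :=
  Real.rpow_le_rpow_of_nonpos hs hsr (neg_nonpos.mpr hp)

/-- Key pointwise estimate. -/
lemma key_pointwise {p q : ℝ} (hp : 0 < p) (hpq : p ≤ q)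
    (y z : EuclideanSpace ℝ (Fin 5)) :
    jap y ^ (-p) * jap z ^ (-q) ≤
      2 ^ p * jap (y - z) ^ (-p) * (jap y ^ (-q) + jap z ^ (-q)) := by
  have hy := jap_pos y
  have hz := jap_pos z
  have hyz := jap_pos (y - z)
  have key : ∀ w : EuclideanSpace ℝ (Fin 5), jap (y - z) ≤ 2 * jap w →
      jap w ^ (-p) ≤ 2 ^ p * jap (y - z) ^ (-p) := by
    intro w hw
    have hw0 := jap_pos w
    have h1 : jap (y - z) / 2 ≤ jap w := by linarith
    have h2 : (jap (y - z) / 2) ^ (-p) = 2 ^ p * jap (y - z) ^ (-p) := by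
      rw [Real.div_rpow hyz.le (by norm_num), Real.rpow_neg (by norm_num : (0:ℝ) ≤ 2)]
      field_simp
    calc jap w ^ (-p) ≤ (jap (y - z) / 2) ^ (-p) :=
          rpow_neg_le_of_le (by positivity) h1 hp.le
      _ = 2 ^ p * jap (y - z) ^ (-p) := h2
  rcases le_total (‖y - z‖ / 2) ‖y‖ with h | h
  · -- jap y ^ (-p) ≤ 2^p jap(y-z)^(-p)
    have h1 : jap y ^ (-p) ≤ 2 ^ p * jap (y - z) ^ (-p) := key y (jap_sub_le h)
    have h2 : jap y ^ (-p) * jap z ^ (-q) ≤ (2 ^ p * jap (y - z) ^ (-p)) * jap z ^ (-q) := by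
      apply mul_le_mul_of_nonneg_right h1 (Real.rpow_nonneg hz.le _)
    refine h2.trans ?_
    have hA : (0:ℝ) ≤ 2 ^ p * jap (y - z) ^ (-p) :=
      mul_nonneg (by positivity) (Real.rpow_nonneg hyz.le _)
    exact mul_le_mul_of_nonneg_left
      (le_add_of_nonneg_left (Real.rpow_nonneg hy.le _)) hA
  · -- ‖y‖ ≤ ‖y-z‖/2, so ‖z‖ ≥ ‖y-z‖/2 ≥ ‖y‖
    have hz2 : ‖y - z‖ / 2 ≤ ‖z‖ := by
      have := norm_sub_norm_le (y - z) y
      simp only [sub_sub_cancel_left, norm_neg] at this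
      linarith
    have h1 : jap z ^ (-p) ≤ 2 ^ p * jap (y - z) ^ (-p) := by
      apply key z
      have : jap (y - z) ≤ 2 * jap z := by
        have h2' : (2 : ℝ) * jap z = Real.sqrt (4 * (1 + ‖z‖ ^ 2)) := by
          rw [show (4 : ℝ) * (1 + ‖z‖ ^ 2) = 2 ^ 2 * (1 + ‖z‖ ^ 2) by ring,
            Real.sqrt_mul (by positivity), Real.sqrt_sq (by norm_num)]
          rfl
        rw [jap, h2']
        apply Real.sqrt_le_sqrt
        nlinarith [norm_nonneg (y - z), norm_nonneg z]
      exact this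
    have hyz' : jap y ≤ jap z := by
      apply Real.sqrt_le_sqrt
      have : ‖y‖ ≤ ‖z‖ := by linarith
      nlinarith [norm_nonneg y, norm_nonneg z]
    have h2 : jap z ^ (-(q - p)) ≤ jap y ^ (-(q - p)) :=
      rpow_neg_le_of_le hy hyz' (by linarith)
    have split : jap z ^ (-q) = jap z ^ (-p) * jap z ^ (-(q - p)) := by
      rw [← Real.rpow_add hz]; ring_nf
    calc jap y ^ (-p) * jap z ^ (-q)
        = jap y ^ (-p) * (jap z ^ (-p) * jap z ^ (-(q - p))) := by rw [split]
      _ ≤ jap y ^ (-p) * ((2 ^ p * jap (y - z) ^ (-p)) * jap y ^ (-(q - p))) := by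
          apply mul_le_mul_of_nonneg_left _ (Real.rpow_nonneg hy.le _)
          exact mul_le_mul h1 h2 (Real.rpow_nonneg hz.le _) (by positivity)
      _ = 2 ^ p * jap (y - z) ^ (-p) * (jap y ^ (-p) * jap y ^ (-(q - p))) := by ring
      _ = 2 ^ p * jap (y - z) ^ (-p) * jap y ^ (-q) := by
          rw [← Real.rpow_add hy]; ring_nf
      _ ≤ 2 ^ p * jap (y - z) ^ (-p) * (jap y ^ (-q) + jap z ^ (-q)) := by
          apply mul_le_mul_of_nonneg_left _ (by positivity)
          have : (0:ℝ) ≤ jap z ^ (-q) := Real.rpow_nonneg hz.le _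
          linarith

lemma integrable_jap {q : ℝ} (hq : 5 < q) :
    Integrable (fun x : EuclideanSpace ℝ (Fin 5) => jap x ^ (-q)) := by
  have hfin : (Module.finrank ℝ (EuclideanSpace ℝ (Fin 5)) : ℝ) < q := by
    simp [finrank_euclideanSpace_fin]; exact_mod_cast hq
  have h := integrable_rpow_neg_one_add_norm_sq (E := EuclideanSpace ℝ (Fin 5))
    (μ := volume) hfin
  convert h using 2 with x
  rw [jap, Real.sqrt_eq_rpow, ← Real.rpow_mul (by positivity)]
  ring_nf

theorem stmt_0 (ℓ₁ ℓ₂ : ℝ) (hℓ₁ : ℓ₁ ∈ Set.Ioo (-1 : ℝ) 1) (hℓ₂ : ℓ₂ ∈ Set.Ioo (-1 : ℝ) 1)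
    (hne : ℓ₁ ≠ ℓ₂)
    (W₁ W₂ : EuclideanSpace ℝ (Fin 5) → ℝ) (hW₁c : Continuous W₁) (hW₂c : Continuous W₂)
    (C : ℝ) (hC : 0 < C)
    (hW₁ : ∀ x, |W₁ x| ≤ C * jap x ^ (-(4 : ℝ)))
    (hW₂ : ∀ x, |W₂ x| ≤ C * jap x ^ (-(4 : ℝ)))
    (α₁ α₂ : ℝ) (hα₁ : 0 < α₁) (hα₁₂ : α₁ ≤ α₂) (hsum : 5 / 4 < α₁ + α₂)
    (hα₂ : 5 / 4 < α₂) :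
    ∃ T₀ > (0 : ℝ), ∃ C' > (0 : ℝ), ∀ t ≥ T₀,
      (∫ x, |W₁ (x - (ℓ₁ * t) • e1)| ^ α₁ * |W₂ (x - (ℓ₂ * t) • e1)| ^ α₂)
        ≤ C' * t ^ (-(4 * α₁)) := by
  set p : ℝ := 4 * α₁ with hp_def
  set q : ℝ := 4 * α₂ with hq_def
  have hp : 0 < p := by positivity
  have hpq : p ≤ q := by simp only [hp_def, hq_def]; linarith
  have hq5 : 5 < q := by simp only [hq_def]; linarith
  set d : ℝ := |ℓ₂ - ℓ₁| with hd_def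
  have hd : 0 < d := abs_pos.mpr (sub_ne_zero.mpr (Ne.symm hne))
  set I : ℝ := ∫ x : EuclideanSpace ℝ (Fin 5), jap x ^ (-q) with hI_def
  have hI0 : 0 ≤ I := integral_nonneg fun x => Real.rpow_nonneg (jap_pos x).le _
  have hC'pos : (0:ℝ) < C ^ (α₁ + α₂) * 2 ^ p * d ^ (-p) * (2 * I) + 1 := by
    have h0 : (0:ℝ) ≤ C ^ (α₁ + α₂) * 2 ^ p * d ^ (-p) * (2 * I) :=
      mul_nonneg (by positivity) (by linarith)
    linarith
  refine ⟨1, one_pos, C ^ (α₁ + α₂) * 2 ^ p * d ^ (-p) * (2 * I) + 1, hC'pos,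
    fun t ht => ?_⟩
  have ht0 : 0 < t := lt_of_lt_of_le one_pos ht
  set a : EuclideanSpace ℝ (Fin 5) := (ℓ₁ * t) • e1 with ha_def
  set b : EuclideanSpace ℝ (Fin 5) := (ℓ₂ * t) • e1 with hb_def
  have hnorm_ba : ‖b - a‖ = d * t := by
    rw [ha_def, hb_def, ← sub_smul, norm_smul, Real.norm_eq_abs]
    have he1 : ‖e1‖ = 1 := by
      rw [e1, EuclideanSpace.norm_single]; norm_num
    rw [he1, mul_one, show ℓ₂ * t - ℓ₁ * t = (ℓ₂ - ℓ₁) * t by ring, abs_mul,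
      abs_of_pos ht0]
  -- the dominating function
  set M : ℝ := C ^ (α₁ + α₂) * 2 ^ p * jap (b - a) ^ (-p) with hM_def
  have hM0 : 0 ≤ M :=
    mul_nonneg (by positivity) (Real.rpow_nonneg (jap_pos _).le _)
  set g : EuclideanSpace ℝ (Fin 5) → ℝ :=
    fun x => M * (jap (x - a) ^ (-q) + jap (x - b) ^ (-q)) with hg_def
  have hint : Integrable (fun x : EuclideanSpace ℝ (Fin 5) => jap x ^ (-q)) :=
    integrable_jap hq5
  have hint_a : Integrable (fun x : EuclideanSpace ℝ (Fin 5) => jap (x - a) ^ (-q)) :=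
    hint.comp_sub_right a
  have hint_b : Integrable (fun x : EuclideanSpace ℝ (Fin 5) => jap (x - b) ^ (-q)) :=
    hint.comp_sub_right b
  have hgi : Integrable g := ((hint_a.add hint_b).const_mul M)
  -- pointwise bound
  have hpt : ∀ x : EuclideanSpace ℝ (Fin 5),
      |W₁ (x - a)| ^ α₁ * |W₂ (x - b)| ^ α₂ ≤ g x := by
    intro x
    have hb1 : |W₁ (x - a)| ^ α₁ ≤ C ^ α₁ * jap (x - a) ^ (-p) := by
      calc |W₁ (x - a)| ^ α₁ ≤ (C * jap (x - a) ^ (-(4:ℝ))) ^ α₁ :=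
            Real.rpow_le_rpow (abs_nonneg _) (hW₁ _) hα₁.le
        _ = C ^ α₁ * jap (x - a) ^ (-p) := by
            rw [Real.mul_rpow hC.le (Real.rpow_nonneg (jap_pos _).le _),
              ← Real.rpow_mul (jap_pos _).le]
            norm_num [hp_def]
    have hb2 : |W₂ (x - b)| ^ α₂ ≤ C ^ α₂ * jap (x - b) ^ (-q) := by
      calc |W₂ (x - b)| ^ α₂ ≤ (C * jap (x - b) ^ (-(4:ℝ))) ^ α₂ :=
            Real.rpow_le_rpow (abs_nonneg _) (hW₂ _) (by positivity)
        _ = C ^ α₂ * jap (x - b) ^ (-q) := by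
            rw [Real.mul_rpow hC.le (Real.rpow_nonneg (jap_pos _).le _),
              ← Real.rpow_mul (jap_pos _).le]
            norm_num [hq_def]
    have hprod : |W₁ (x - a)| ^ α₁ * |W₂ (x - b)| ^ α₂ ≤
        C ^ (α₁ + α₂) * (jap (x - a) ^ (-p) * jap (x - b) ^ (-q)) := by
      have := mul_le_mul hb1 hb2 (Real.rpow_nonneg (abs_nonneg _) _)
        (mul_nonneg (by positivity) (Real.rpow_nonneg (jap_pos _).le _))
      calc |W₁ (x - a)| ^ α₁ * |W₂ (x - b)| ^ α₂
          ≤ (C ^ α₁ * jap (x - a) ^ (-p)) * (C ^ α₂ * jap (x - b) ^ (-q)) := this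
        _ = C ^ (α₁ + α₂) * (jap (x - a) ^ (-p) * jap (x - b) ^ (-q)) := by
            rw [Real.rpow_add hC]; ring
    refine hprod.trans ?_
    have hkey := key_pointwise hp hpq (x - a) (x - b)
    have hyz : (x - a) - (x - b) = b - a := by abel
    rw [hyz] at hkey
    calc C ^ (α₁ + α₂) * (jap (x - a) ^ (-p) * jap (x - b) ^ (-q))
        ≤ C ^ (α₁ + α₂) * (2 ^ p * jap (b - a) ^ (-p) *
            (jap (x - a) ^ (-q) + jap (x - b) ^ (-q))) := by
          apply mul_le_mul_of_nonneg_left hkey (by positivity)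
      _ = g x := by rw [hg_def, hM_def]; ring
  -- monotonicity of the integral
  have hmono : (∫ x, |W₁ (x - a)| ^ α₁ * |W₂ (x - b)| ^ α₂) ≤ ∫ x, g x := by
    apply integral_mono_of_nonneg
    · filter_upwards with x
      positivity
    · exact hgi
    · filter_upwards with x using hpt x
  -- compute ∫ g
  have hgint : (∫ x, g x) = M * (2 * I) := by
    rw [hg_def]
    rw [integral_const_mul, integral_add hint_a hint_b]
    have h1 : (∫ x, jap (x - a) ^ (-q)) = I := by
      rw [hI_def]
      exact integral_sub_right_eq_self (fun x => jap x ^ (-q)) a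
    have h2 : (∫ x, jap (x - b) ^ (-q)) = I := by
      rw [hI_def]
      exact integral_sub_right_eq_self (fun x => jap x ^ (-q)) b
    rw [h1, h2]; ring
  -- estimate M
  have hMle : M ≤ C ^ (α₁ + α₂) * 2 ^ p * (d ^ (-p) * t ^ (-p)) := by
    rw [hM_def]
    have hdt : 0 < d * t := by positivity
    have hjap : d * t ≤ jap (b - a) := hnorm_ba ▸ norm_le_jap (b - a)
    have : jap (b - a) ^ (-p) ≤ (d * t) ^ (-p) :=
      rpow_neg_le_of_le hdt hjap hp.le
    rw [Real.mul_rpow hd.le ht0.le] at this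
    apply mul_le_mul_of_nonneg_left this (by positivity)
  calc (∫ x, |W₁ (x - a)| ^ α₁ * |W₂ (x - b)| ^ α₂)
      ≤ ∫ x, g x := hmono
    _ = M * (2 * I) := hgint
    _ ≤ (C ^ (α₁ + α₂) * 2 ^ p * (d ^ (-p) * t ^ (-p))) * (2 * I) := by
        apply mul_le_mul_of_nonneg_right hMle (by positivity)
    _ = (C ^ (α₁ + α₂) * 2 ^ p * d ^ (-p) * (2 * I)) * t ^ (-p) := by ring
    _ ≤ (C ^ (α₁ + α₂) * 2 ^ p * d ^ (-p) * (2 * I) + 1) * t ^ (-(4 * α₁)) := by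
        rw [← hp_def]
        apply mul_le_mul_of_nonneg_right (by linarith) (Real.rpow_nonneg ht0.le _)
end

section
/- For every N ≥ 1 there exists a constant C > 0 such that for all real numbers a₁, …, a_N and every index m ∈ {1, …, N}: |f′(a₁ + ⋯ + a_N) − f′(a_m)| ≤ C · Σ_{n ≠ m} ( |a_n| · |a_m|^{1/3} + |a_n|^{4/3} ). -/
/-- `f'(u) = (7/3) |u|^{4/3}`, the derivative of the nonlinearity `f(u) = |u|^{4/3} u`. -/
noncomputable def fnl' (u : ℝ) : ℝ := (7 / 3) * |u| ^ ((4 : ℝ) / 3)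

lemma cube_root_add {x y : ℝ} (hx : 0 ≤ x) (hy : 0 ≤ y) :
    (x + y) ^ ((1 : ℝ) / 3) ≤ x ^ ((1 : ℝ) / 3) + y ^ ((1 : ℝ) / 3) := by
  have h := NNReal.rpow_add_le_add_rpow x.toNNReal y.toNNReal
    (by norm_num : (0:ℝ) ≤ 1/3) (by norm_num : (1:ℝ)/3 ≤ 1)
  have h2 := NNReal.coe_le_coe.2 h
  simpa [Real.toNNReal_add hx hy, NNReal.coe_rpow, Real.coe_toNNReal, hx, hy,
    Real.coe_toNNReal x hx, Real.coe_toNNReal y hy] using h2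

/-- Mean value inequality: for `0 ≤ t ≤ s`, `s^{4/3} - t^{4/3} ≤ (4/3) s^{1/3} (s - t)`. -/
lemma mvt_pow {s t : ℝ} (ht : 0 ≤ t) (hts : t ≤ s) :
    s ^ ((4 : ℝ) / 3) - t ^ ((4 : ℝ) / 3) ≤ 4 / 3 * s ^ ((1 : ℝ) / 3) * (s - t) := by
  rcases eq_or_lt_of_le hts with rfl | hlt
  · simp
  · have hcont : ContinuousOn (fun x : ℝ => x ^ ((4 : ℝ) / 3)) (Set.Icc t s) := by
      intro x _
      exact (Real.hasDerivAt_rpow_const (p := (4:ℝ)/3)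
        (Or.inr (by norm_num))).continuousAt.continuousWithinAt
    have hderiv : ∀ x ∈ Set.Ioo t s,
        HasDerivAt (fun x : ℝ => x ^ ((4 : ℝ) / 3)) ((4:ℝ)/3 * x ^ ((4:ℝ)/3 - 1)) x := by
      intro x _
      exact Real.hasDerivAt_rpow_const (Or.inr (by norm_num))
    obtain ⟨c, hc, hceq⟩ := exists_hasDerivAt_eq_slope _ _ hlt hcont hderiv
    have hc0 : 0 ≤ c := le_of_lt (lt_of_le_of_lt ht hc.1)
    have hcs : c ^ ((1:ℝ)/3) ≤ s ^ ((1:ℝ)/3) :=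
      Real.rpow_le_rpow hc0 (le_of_lt hc.2) (by norm_num)
    have hst : (0:ℝ) < s - t := by linarith
    have hslope : (s ^ ((4:ℝ)/3) - t ^ ((4:ℝ)/3)) / (s - t) ≤ 4/3 * s ^ ((1:ℝ)/3) := by
      rw [← hceq, show ((4:ℝ)/3 - 1) = (1:ℝ)/3 by norm_num]
      exact mul_le_mul_of_nonneg_left hcs (by norm_num)
    rw [div_le_iff₀ hst] at hslope
    linarith

/-- Pointwise estimate: for `s, t ≥ 0`,
`|s^{4/3} - t^{4/3}| ≤ (4/3)(|s-t| t^{1/3} + |s-t|^{4/3})`. -/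
lemma key_est {s t : ℝ} (hs : 0 ≤ s) (ht : 0 ≤ t) :
    |s ^ ((4 : ℝ) / 3) - t ^ ((4 : ℝ) / 3)| ≤
      4 / 3 * (|s - t| * t ^ ((1 : ℝ) / 3) + |s - t| ^ ((4 : ℝ) / 3)) := by
  rcases le_total t s with hts | hst
  · -- s ≥ t
    have hd : 0 ≤ s - t := by linarith
    have habs : |s - t| = s - t := abs_of_nonneg hd
    have h1 : s ^ ((4:ℝ)/3) - t ^ ((4:ℝ)/3) ≤ 4/3 * s ^ ((1:ℝ)/3) * (s - t) :=
      mvt_pow ht hts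
    have h2 : s ^ ((1:ℝ)/3) ≤ t ^ ((1:ℝ)/3) + (s - t) ^ ((1:ℝ)/3) := by
      have := cube_root_add ht hd
      simpa using this
    have h3 : (s - t) ^ ((1:ℝ)/3) * (s - t) = (s - t) ^ ((4:ℝ)/3) := by
      rw [show ((4:ℝ)/3) = (1:ℝ)/3 + 1 by norm_num, Real.rpow_add' hd (by norm_num),
        Real.rpow_one]
    have hnn : 0 ≤ s ^ ((4:ℝ)/3) - t ^ ((4:ℝ)/3) := by
      have := Real.rpow_le_rpow ht hts (by norm_num : (0:ℝ) ≤ 4/3)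
      linarith
    rw [abs_of_nonneg hnn, habs]
    calc s ^ ((4:ℝ)/3) - t ^ ((4:ℝ)/3)
        ≤ 4/3 * s ^ ((1:ℝ)/3) * (s - t) := h1
      _ ≤ 4/3 * (t ^ ((1:ℝ)/3) + (s - t) ^ ((1:ℝ)/3)) * (s - t) := by
          apply mul_le_mul_of_nonneg_right _ hd
          exact mul_le_mul_of_nonneg_left h2 (by norm_num)
      _ = 4/3 * ((s - t) * t ^ ((1:ℝ)/3) + (s - t) ^ ((4:ℝ)/3)) := by
          rw [← h3]; ring
  · -- t ≥ s
    have hd : 0 ≤ t - s := by linarith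
    have habs : |s - t| = t - s := by rw [abs_sub_comm]; exact abs_of_nonneg hd
    have h1 : t ^ ((4:ℝ)/3) - s ^ ((4:ℝ)/3) ≤ 4/3 * t ^ ((1:ℝ)/3) * (t - s) :=
      mvt_pow hs hst
    have hnn : 0 ≤ t ^ ((4:ℝ)/3) - s ^ ((4:ℝ)/3) := by
      have := Real.rpow_le_rpow hs hst (by norm_num : (0:ℝ) ≤ 4/3)
      linarith
    rw [abs_sub_comm, abs_of_nonneg hnn, habs]
    have h4 : (0:ℝ) ≤ (t - s) ^ ((4:ℝ)/3) := Real.rpow_nonneg hd _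
    calc t ^ ((4:ℝ)/3) - s ^ ((4:ℝ)/3)
        ≤ 4/3 * t ^ ((1:ℝ)/3) * (t - s) := h1
      _ = 4/3 * ((t - s) * t ^ ((1:ℝ)/3)) := by ring
      _ ≤ 4/3 * ((t - s) * t ^ ((1:ℝ)/3) + (t - s) ^ ((4:ℝ)/3)) := by
          nlinarith

theorem stmt_2 (N : ℕ) (hN : 1 ≤ N) :
    ∃ C > (0 : ℝ), ∀ (a : Fin N → ℝ) (m : Fin N),
      |fnl' (∑ n, a n) - fnl' (a m)| ≤
        C * ∑ n ∈ Finset.univ.erase m,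
          (|a n| * |a m| ^ ((1 : ℝ) / 3) + |a n| ^ ((4 : ℝ) / 3)) := by
  set D : ℝ := (N : ℝ) ^ ((1:ℝ)/3) with hD
  have hD1 : (1:ℝ) ≤ D := by
    rw [hD]
    have : (1:ℝ) ≤ (N:ℝ) := by exact_mod_cast hN
    calc (1:ℝ) = (1:ℝ) ^ ((1:ℝ)/3) := (Real.one_rpow _).symm
      _ ≤ (N:ℝ) ^ ((1:ℝ)/3) := Real.rpow_le_rpow (by norm_num) this (by norm_num)
  refine ⟨28/9 * D, by positivity, ?_⟩
  intro a m
  set s := |∑ n, a n| with hsdef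
  set t := |a m| with htdef
  set h := ∑ n ∈ Finset.univ.erase m, a n with hhdef
  have hsum : (∑ n, a n) = a m + h := by
    rw [hhdef, Finset.add_sum_erase _ a (Finset.mem_univ m)]
  set S := ∑ n ∈ Finset.univ.erase m, |a n| with hSdef
  have hS0 : 0 ≤ S := Finset.sum_nonneg fun n _ => abs_nonneg _
  have hst : |s - t| ≤ S := by
    calc |s - t| ≤ |(∑ n, a n) - a m| := abs_abs_sub_abs_le_abs_sub _ _
      _ = |h| := by rw [hsum]; congr 1; ring
      _ ≤ S := Finset.abs_sum_le_sum_abs _ _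
  have hkey := key_est (abs_nonneg (∑ n, a n)) (abs_nonneg (a m))
  -- monotonicity in |s - t|
  have hmono : |s - t| * t ^ ((1:ℝ)/3) + |s - t| ^ ((4:ℝ)/3) ≤
      S * t ^ ((1:ℝ)/3) + S ^ ((4:ℝ)/3) := by
    exact add_le_add (mul_le_mul_of_nonneg_right hst (Real.rpow_nonneg (abs_nonneg _) _))
      (Real.rpow_le_rpow (abs_nonneg _) hst (by norm_num))
  have hS43 : S ^ ((4:ℝ)/3) ≤ D * ∑ n ∈ Finset.univ.erase m, |a n| ^ ((4:ℝ)/3) := by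
    have hc := Real.rpow_sum_le_const_mul_sum_rpow_of_nonneg (s := Finset.univ.erase m)
      (f := fun n => |a n|) (p := (4:ℝ)/3) (by norm_num) (fun i _ => abs_nonneg _)
    have hcard : ((Finset.univ.erase m).card : ℝ) ^ ((4:ℝ)/3 - 1) ≤ D := by
      rw [hD, show ((4:ℝ)/3 - 1) = (1:ℝ)/3 by norm_num]
      apply Real.rpow_le_rpow (by positivity) _ (by norm_num)
      have hcard' : (Finset.univ.erase m).card ≤ N :=
        le_trans (Finset.card_le_card (Finset.erase_subset _ _)) (by simp)
      exact_mod_cast hcard'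
    calc S ^ ((4:ℝ)/3) ≤ ((Finset.univ.erase m).card : ℝ) ^ ((4:ℝ)/3 - 1) *
          ∑ n ∈ Finset.univ.erase m, |a n| ^ ((4:ℝ)/3) := hc
      _ ≤ D * ∑ n ∈ Finset.univ.erase m, |a n| ^ ((4:ℝ)/3) := by
          apply mul_le_mul_of_nonneg_right hcard
          exact Finset.sum_nonneg fun n _ => Real.rpow_nonneg (abs_nonneg _) _
  have hSt : S * t ^ ((1:ℝ)/3) = ∑ n ∈ Finset.univ.erase m, |a n| * t ^ ((1:ℝ)/3) :=
    by simp only [hSdef, Finset.sum_mul]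
  have hfinal : |fnl' (∑ n, a n) - fnl' (a m)| =
      7/3 * |s ^ ((4:ℝ)/3) - t ^ ((4:ℝ)/3)| := by
    unfold fnl'
    rw [← mul_sub, abs_mul, abs_of_nonneg (by norm_num : (0:ℝ) ≤ 7/3)]
  rw [hfinal]
  have hsum1 : 0 ≤ ∑ n ∈ Finset.univ.erase m, |a n| * t ^ ((1:ℝ)/3) :=
    Finset.sum_nonneg fun n _ => mul_nonneg (abs_nonneg _) (Real.rpow_nonneg (abs_nonneg _) _)
  calc 7/3 * |s ^ ((4:ℝ)/3) - t ^ ((4:ℝ)/3)|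
      ≤ 7/3 * (4/3 * (|s - t| * t ^ ((1:ℝ)/3) + |s - t| ^ ((4:ℝ)/3))) := by
        exact mul_le_mul_of_nonneg_left hkey (by norm_num)
    _ = 28/9 * (|s - t| * t ^ ((1:ℝ)/3) + |s - t| ^ ((4:ℝ)/3)) := by ring
    _ ≤ 28/9 * (S * t ^ ((1:ℝ)/3) + S ^ ((4:ℝ)/3)) := by
        exact mul_le_mul_of_nonneg_left hmono (by norm_num)
    _ ≤ 28/9 * ((∑ n ∈ Finset.univ.erase m, |a n| * t ^ ((1:ℝ)/3)) +
          D * ∑ n ∈ Finset.univ.erase m, |a n| ^ ((4:ℝ)/3)) := by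
        rw [hSt]
        exact mul_le_mul_of_nonneg_left (by linarith) (by norm_num)
    _ ≤ 28/9 * (D * (∑ n ∈ Finset.univ.erase m, |a n| * t ^ ((1:ℝ)/3)) +
          D * ∑ n ∈ Finset.univ.erase m, |a n| ^ ((4:ℝ)/3)) := by
        apply mul_le_mul_of_nonneg_left _ (by norm_num)
        have : (∑ n ∈ Finset.univ.erase m, |a n| * t ^ ((1:ℝ)/3)) ≤
            D * (∑ n ∈ Finset.univ.erase m, |a n| * t ^ ((1:ℝ)/3)) := by
          nlinarith
        linarith
    _ = 28/9 * D * ∑ n ∈ Finset.univ.erase m,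
          (|a n| * t ^ ((1:ℝ)/3) + |a n| ^ ((4:ℝ)/3)) := by
        rw [Finset.sum_add_distrib]; ring
end

section
/- Let ℓ ∈ (−1,1), λ > 0, let P : ℝ⁵ → ℝ be continuous, and let Y : ℝ⁵ → ℝ be twice continuously differentiable and satisfy pointwise −(1−ℓ²) ∂²_{x₁}Y − Σ_{i=2}^{5} ∂²_{x_i}Y − f′(P) Y = −λ² Y on ℝ⁵. For each choice of sign (±), define Y₁^± (x) = Y(x) e^{∓ (ℓλ/√(1−ℓ²)) x₁} and Y₂^±(x) = −( ℓ ∂_{x₁}Y(x) ∓ (λ/√(1−ℓ²)) Y(x) ) e^{∓ (ℓλ/√(1−ℓ²)) x₁}. Then the pair (Y₁^±, Y₂^±) satisfies pointwise on ℝ⁵: (a) −Δ Y₁^± − f′(P) Y₁^± − ℓ ∂_{x₁} Y₂^± = ∓ λ √(1−ℓ²) · Y₂^±, and (b) ℓ ∂_{x₁} Y₁^± + Y₂^± = ± λ √(1−ℓ²) · Y₁^±. -/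
/-- The partial derivative `∂_{x_i} F` of a function `F : ℝ⁵ → ℝ`. -/
noncomputable def pd (i : Fin 5) (F : EuclideanSpace ℝ (Fin 5) → ℝ)
    (x : EuclideanSpace ℝ (Fin 5)) : ℝ :=
  fderiv ℝ F x (EuclideanSpace.single i 1)

lemma pd_mul_exp (c : ℝ) (F : EuclideanSpace ℝ (Fin 5) → ℝ) (hF : Differentiable ℝ F)
    (i : Fin 5) (x : EuclideanSpace ℝ (Fin 5)) :
    pd i (fun y => F y * Real.exp (c * y 0)) x
      = (pd i F x + (if i = 0 then c * F x else 0)) * Real.exp (c * x 0) := by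
  have hproj : HasFDerivAt (fun y : EuclideanSpace ℝ (Fin 5) => y 0)
      (EuclideanSpace.proj (0 : Fin 5) : EuclideanSpace ℝ (Fin 5) →L[ℝ] ℝ) x := by
    exact ContinuousLinearMap.hasFDerivAt
      (EuclideanSpace.proj (0 : Fin 5) : EuclideanSpace ℝ (Fin 5) →L[ℝ] ℝ)
  have hE : HasFDerivAt (fun y : EuclideanSpace ℝ (Fin 5) => Real.exp (c * y 0))
      (Real.exp (c * x 0) • (c • (EuclideanSpace.proj (0 : Fin 5) : EuclideanSpace ℝ (Fin 5) →L[ℝ] ℝ))) x :=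
    (hproj.const_mul c).exp
  have hmul : HasFDerivAt (fun y => F y * Real.exp (c * y 0)) _ x := (hF x).hasFDerivAt.mul hE
  rw [pd, hmul.fderiv]
  simp only [ContinuousLinearMap.add_apply, ContinuousLinearMap.smul_apply,
    PiLp.proj_apply, EuclideanSpace.single_apply, smul_eq_mul]
  by_cases h : i = 0
  · subst h; simp [pd]; ring
  · have : ((0 : Fin 5) = i) = False := by simp [Ne.symm h]
    simp [this, h, pd]; ring

lemma pd_comb (k₁ k₂ : ℝ) (A B : EuclideanSpace ℝ (Fin 5) → ℝ)
    (hA : Differentiable ℝ A) (hB : Differentiable ℝ B) (i : Fin 5)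
    (x : EuclideanSpace ℝ (Fin 5)) :
    pd i (fun y => k₁ * A y + k₂ * B y) x = k₁ * pd i A x + k₂ * pd i B x := by
  have h : HasFDerivAt (fun y => k₁ * A y + k₂ * B y) _ x := ((hA x).hasFDerivAt.const_mul k₁).add ((hB x).hasFDerivAt.const_mul k₂)
  rw [pd, h.fderiv]
  simp [pd]

lemma diff_pd (Y : EuclideanSpace ℝ (Fin 5) → ℝ) (hY : ContDiff ℝ 2 Y) (i : Fin 5) :
    Differentiable ℝ (pd i Y) := by
  have h1 : ContDiff ℝ 1 (fderiv ℝ Y) := hY.fderiv_right (by norm_num)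
  have h2 := (ContinuousLinearMap.apply ℝ ℝ
      (EuclideanSpace.single i (1 : ℝ))).contDiff.comp h1
  exact h2.differentiable (by norm_num)

theorem stmt_11 (ℓ lam : ℝ) (hℓ : ℓ ∈ Set.Ioo (-1 : ℝ) 1) (hlam : 0 < lam)
    (P Y : EuclideanSpace ℝ (Fin 5) → ℝ) (hP : Continuous P) (hY : ContDiff ℝ 2 Y)
    (heq : ∀ x, -(1 - ℓ ^ 2) * pd 0 (pd 0 Y) x
        - (∑ i ∈ Finset.univ.erase (0 : Fin 5), pd i (pd i Y) x)
        - fnl' (P x) * Y x = -lam ^ 2 * Y x)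
    -- `σ = 1` corresponds to the `+` sign and `σ = -1` to the `-` sign
    (σ : ℝ) (hσ : σ = 1 ∨ σ = -1)
    (Y₁ Y₂ : EuclideanSpace ℝ (Fin 5) → ℝ)
    (hY₁ : ∀ x, Y₁ x = Y x * Real.exp (-σ * (ℓ * lam / Real.sqrt (1 - ℓ ^ 2)) * x 0))
    (hY₂ : ∀ x, Y₂ x = -(ℓ * pd 0 Y x - σ * (lam / Real.sqrt (1 - ℓ ^ 2)) * Y x)
        * Real.exp (-σ * (ℓ * lam / Real.sqrt (1 - ℓ ^ 2)) * x 0)) :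
    (∀ x, -(∑ i, pd i (pd i Y₁) x) - fnl' (P x) * Y₁ x - ℓ * pd 0 Y₂ x
        = -σ * (lam * Real.sqrt (1 - ℓ ^ 2)) * Y₂ x) ∧
    (∀ x, ℓ * pd 0 Y₁ x + Y₂ x = σ * (lam * Real.sqrt (1 - ℓ ^ 2)) * Y₁ x) := by
  obtain ⟨hl1, hl2⟩ := hℓ
  have hpos : (0 : ℝ) < 1 - ℓ ^ 2 := by nlinarith
  obtain ⟨s, hsdef⟩ : ∃ t : ℝ, Real.sqrt (1 - ℓ ^ 2) = t := ⟨_, rfl⟩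
  have hs2 : s ^ 2 = 1 - ℓ ^ 2 := by rw [← hsdef]; exact Real.sq_sqrt hpos.le
  have hs0 : 0 < s := by rw [← hsdef]; exact Real.sqrt_pos.mpr hpos
  simp only [hsdef] at hY₁ hY₂ ⊢
  obtain ⟨c, hc⟩ : ∃ c : ℝ, c = -σ * (ℓ * lam / s) := ⟨_, rfl⟩
  obtain ⟨a, ha⟩ : ∃ a : ℝ, a = σ * (lam / s) := ⟨_, rfl⟩
  simp only [← hc, ← ha] at hY₁ hY₂
  have hca : c = -(ℓ * a) := by rw [hc, ha]; ring
  have hσ2 : σ ^ 2 = 1 := by rcases hσ with h | h <;> rw [h] <;> norm_num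
  have h1 : a * s = σ * lam := by rw [ha]; field_simp
  have hYd : Differentiable ℝ Y := hY.differentiable (by norm_num)
  have hpdY : ∀ i, Differentiable ℝ (pd i Y) := diff_pd Y hY
  have hY₁f : Y₁ = fun y => Y y * Real.exp (c * y 0) := funext hY₁
  have hY₂f : Y₂ = fun y => (-(ℓ * pd 0 Y y - a * Y y)) * Real.exp (c * y 0) := funext hY₂
  -- first derivatives of Y₁
  have hpY₁ : ∀ i x, pd i Y₁ x
      = (pd i Y x + (if i = 0 then c * Y x else 0)) * Real.exp (c * x 0) := by
    intro i x; rw [hY₁f]; exact pd_mul_exp c Y hYd i x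
  -- second derivatives of Y₁
  have hpp : ∀ i x, pd i (pd i Y₁) x
      = (pd i (pd i Y) x + (if i = 0 then 2 * c * pd 0 Y x + c ^ 2 * Y x else 0))
        * Real.exp (c * x 0) := by
    intro i x
    by_cases h : i = 0
    · subst h
      have hG : Differentiable ℝ (fun y => 1 * pd 0 Y y + c * Y y) :=
        ((hpdY 0).const_mul 1).add (hYd.const_mul c)
      have h1' : pd 0 Y₁ = fun y => (1 * pd 0 Y y + c * Y y) * Real.exp (c * y 0) := by
        funext y; rw [hpY₁ 0 y]; rw [if_pos rfl]; ring
      rw [h1', pd_mul_exp c _ hG 0 x, pd_comb 1 c (pd 0 Y) Y (hpdY 0) hYd 0 x]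
      rw [if_pos rfl, if_pos rfl]; ring
    · have h1' : pd i Y₁ = fun y => pd i Y y * Real.exp (c * y 0) := by
        funext y; rw [hpY₁ i y, if_neg h]; ring
      rw [h1', pd_mul_exp c _ (hpdY i) i x, if_neg h, if_neg h]
  -- first derivative of Y₂
  have hG₂ : Differentiable ℝ (fun y => (-ℓ) * pd 0 Y y + a * Y y) :=
    ((hpdY 0).const_mul (-ℓ)).add (hYd.const_mul a)
  have hY₂f' : Y₂ = fun y => ((-ℓ) * pd 0 Y y + a * Y y) * Real.exp (c * y 0) := by
    rw [hY₂f]; funext y; ring_nf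
  have hpY₂ : ∀ x, pd 0 Y₂ x
      = (((-ℓ) * pd 0 (pd 0 Y) x + a * pd 0 Y x)
          + c * ((-ℓ) * pd 0 Y x + a * Y x)) * Real.exp (c * x 0) := by
    intro x
    rw [hY₂f', pd_mul_exp c _ hG₂ 0 x, pd_comb (-ℓ) a (pd 0 Y) Y (hpdY 0) hYd 0 x]
    rw [if_pos rfl]
  -- the elliptic equation rewritten in terms of the full sum
  have hS : ∀ x, ∑ i, pd i (pd i Y) x
      = ℓ ^ 2 * pd 0 (pd 0 Y) x - fnl' (P x) * Y x + lam ^ 2 * Y x := by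
    intro x
    have hsplit := Finset.sum_erase_add Finset.univ (fun i => pd i (pd i Y) x)
      (Finset.mem_univ (0 : Fin 5))
    have h := heq x
    linarith
  constructor
  · intro x
    have hsum : ∑ i, pd i (pd i Y₁) x
        = ((∑ i, pd i (pd i Y) x) + 2 * c * pd 0 Y x + c ^ 2 * Y x) * Real.exp (c * x 0) := by
      rw [Fin.sum_univ_five, Fin.sum_univ_five, hpp 0 x, hpp 1 x, hpp 2 x, hpp 3 x, hpp 4 x,
        if_pos rfl, if_neg (by decide : ¬(1 : Fin 5) = 0), if_neg (by decide : ¬(2 : Fin 5) = 0),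
        if_neg (by decide : ¬(3 : Fin 5) = 0), if_neg (by decide : ¬(4 : Fin 5) = 0)]
      ring
    rw [hsum, hY₁ x, hY₂ x, hpY₂ x, hS x]
    linear_combination (Real.exp (c * x 0)) *
      ((ℓ ^ 2 * pd 0 Y x - 2 * pd 0 Y x - c * Y x) * hca
        + (-(ℓ * a * pd 0 Y x)) * hs2
        + (ℓ * s * pd 0 Y x + σ * lam * Y x) * h1
        + lam ^ 2 * Y x * hσ2)
  · intro x
    rw [hpY₁ 0 x, hY₂ x, hY₁ x, if_pos rfl]
    linear_combination (Real.exp (c * x 0)) *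
      (ℓ * Y x * hca + (-(a * Y x)) * hs2 + s * Y x * h1)
end
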